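/- Let d ≥ 2 and G = ℤ^d. Then for every m ≥ 2d, G_bound(m) = {0}: for every nonzero X ∈ ℤ^d and every constant K > 0 there exists a symmetric generating set S of ℤ^d of cardinality at most 2d with l_S(X) > K. -/

import Mathlib

/-- A finite symmetric generating set of an additive group. -/
def IsSymmGenAdd {G : Type*} [AddGroup G] (S : Finset G) : Prop :=
  (∀ s ∈ S, -s ∈ S) ∧ AddSubgroup.closure (S : Set G) = ⊤

/-- The word length of `g` with respect to `S`: the least `n` such that
`g` is a sum of `n` elements of `S`. -/
noncomputable def addWordLen {G : Type*} [AddGroup G] (S : Finset G) (g : G) : ℕ :=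
  sInf {n : ℕ | ∃ w : List G, (∀ s ∈ w, s ∈ S) ∧ w.length = n ∧ w.sum = g}

/-- Elements of uniformly bounded word length. -/
def AddGBound (G : Type*) [AddGroup G] : Set G :=
  {g | ∃ M : ℕ, 0 < M ∧ ∀ S : Finset G, IsSymmGenAdd S → addWordLen S g ≤ M}

/-- Elements of uniformly bounded word length over symmetric generating sets of
cardinality at most `d`. -/
def AddGBoundD (G : Type*) [AddGroup G] (d : ℕ) : Set G :=
  {g | ∃ M : ℕ, 0 < M ∧ ∀ S : Finset G, IsSymmGenAdd S → S.card ≤ d →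
    addWordLen S g ≤ M}

/-!
An additive character `f : G →+ ℤ` with `|f| ≤ 1` on a generating set `S` bounds word length
from below: `|f g| ≤ l_S(g)`. For `X ≠ 0` in `ℤ^d` pick `X i ≠ 0` and `j ≠ i`, and apply the
shear `Y ↦ Y - N Y_i e_j` to the `2d` vectors `±e_k`. The character `Y ↦ Y_j + N Y_i` undoes the
shear on the `j`-th coordinate, so it is bounded by `1` on the new generators, while on `X` it has
size at least `N - |X j|`, which exceeds any given `K` for `N` large.
-/

section WordLength

variable {G : Type*} [AddGroup G] {S : Finset G}

theorem addWordLen_zero (S : Finset G) : addWordLen S 0 = 0 :=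
  Nat.sInf_eq_zero.mpr (Or.inl ⟨[], by simp, rfl, rfl⟩)

theorem IsSymmGenAdd.exists_list_sum_eq (hS : IsSymmGenAdd S) (g : G) :
    ∃ w : List G, (∀ s ∈ w, s ∈ S) ∧ w.sum = g := by
  have hg : g ∈ AddSubmonoid.closure ((S : Set G) ∪ -(S : Set G)) := by
    rw [← AddSubgroup.closure_toAddSubmonoid, hS.2]
    trivial
  obtain ⟨w, hwS, hw⟩ := AddSubmonoid.exists_list_of_mem_closure hg
  refine ⟨w, fun s hs => ?_, hw⟩
  rcases hwS s hs with h | h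
  · exact h
  · simpa using hS.1 (-s) h

theorem IsSymmGenAdd.exists_list_length_eq_addWordLen (hS : IsSymmGenAdd S) (g : G) :
    ∃ w : List G, (∀ s ∈ w, s ∈ S) ∧ w.length = addWordLen S g ∧ w.sum = g := by
  obtain ⟨w, hwS, hw⟩ := hS.exists_list_sum_eq g
  refine Nat.sInf_mem (s := {n | ∃ w : List G, (∀ s ∈ w, s ∈ S) ∧ w.length = n ∧ w.sum = g}) ?_
  exact ⟨w.length, w, hwS, rfl, hw⟩

theorem abs_map_list_sum_le_length (f : G →+ ℤ) (hf : ∀ s ∈ S, |f s| ≤ 1) :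
    ∀ w : List G, (∀ s ∈ w, s ∈ S) → |f w.sum| ≤ w.length
  | [], _ => by simp
  | s :: w, hw => by
    have hs := hf s (hw s List.mem_cons_self)
    have ih := abs_map_list_sum_le_length f hf w fun t ht => hw t (List.mem_cons_of_mem s ht)
    calc |f (s :: w).sum| = |f s + f w.sum| := by rw [List.sum_cons, map_add]
      _ ≤ |f s| + |f w.sum| := abs_add_le _ _
      _ ≤ ((s :: w).length : ℤ) := by push_cast [List.length_cons]; linarith

theorem IsSymmGenAdd.abs_le_addWordLen (hS : IsSymmGenAdd S) (f : G →+ ℤ)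
    (hf : ∀ s ∈ S, |f s| ≤ 1) (g : G) : |f g| ≤ addWordLen S g := by
  obtain ⟨w, hwS, hlen, rfl⟩ := hS.exists_list_length_eq_addWordLen g
  rw [← hlen]
  exact abs_map_list_sum_le_length f hf w hwS

theorem IsSymmGenAdd.image {H : Type*} [AddGroup H] [DecidableEq H] (hS : IsSymmGenAdd S)
    (f : G →+ H) (hf : Function.Surjective f) : IsSymmGenAdd (S.image f) := by
  refine ⟨?_, ?_⟩
  · simp only [Finset.mem_image]
    rintro _ ⟨s, hs, rfl⟩
    exact ⟨-s, hS.1 s hs, map_neg f s⟩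
  · rw [Finset.coe_image, ← AddMonoidHom.map_closure, hS.2, AddSubgroup.map_top_of_surjective f hf]

theorem zero_mem_addGBoundD (G : Type*) [AddGroup G] (d : ℕ) : (0 : G) ∈ AddGBoundD G d :=
  ⟨1, one_pos, fun S _ _ => (addWordLen_zero S).trans_le zero_le_one⟩

theorem addGBoundD_eq_singleton_zero {d : ℕ}
    (h : ∀ X : G, X ≠ 0 → ∀ K : ℕ, ∃ S : Finset G, IsSymmGenAdd S ∧ S.card ≤ d ∧
      K < addWordLen S X) :
    AddGBoundD G d = {0} := by
  refine Set.eq_singleton_iff_unique_mem.mpr ⟨zero_mem_addGBoundD G d, ?_⟩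
  rintro X ⟨M, -, hM⟩
  by_contra hX
  obtain ⟨S, hS, hcard, hlt⟩ := h X hX M
  exact (hM S hS hcard).not_gt hlt

end WordLength

section Lattice

variable {ι : Type*} [DecidableEq ι]

def shear (i j : ι) (n : ℤ) : (ι → ℤ) →+ (ι → ℤ) :=
  AddMonoidHom.mk' (fun Y => Y + Pi.single j (n * Y i)) fun Y Z => by
    simp only [Pi.add_apply, mul_add, Pi.single_add]
    abel

theorem shear_apply_self {i j : ι} (n : ℤ) (Y : ι → ℤ) : shear i j n Y j = Y j + n * Y i := by
  simp [shear]

theorem shear_shear_neg {i j : ι} (hij : i ≠ j) (n : ℤ) (Y : ι → ℤ) :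
    shear i j n (shear i j (-n) Y) = Y := by
  have hi : shear i j (-n) Y i = Y i := by simp [shear, Pi.single_eq_of_ne hij]
  simp only [shear, AddMonoidHom.mk'_apply] at hi ⊢
  rw [hi, add_assoc, ← Pi.single_add, neg_mul, neg_add_cancel, Pi.single_zero, add_zero]

variable [Fintype ι]

def signedBasis (ι : Type*) [Fintype ι] [DecidableEq ι] : Finset (ι → ℤ) :=
  Finset.univ.image (fun k => Pi.single k 1) ∪ Finset.univ.image (fun k => -Pi.single k 1)

theorem card_signedBasis_le : (signedBasis ι).card ≤ 2 * Fintype.card ι := by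
  calc (signedBasis ι).card
      ≤ (Finset.univ.image fun k : ι => (Pi.single k 1 : ι → ℤ)).card +
        (Finset.univ.image fun k : ι => -(Pi.single k 1 : ι → ℤ)).card := Finset.card_union_le _ _
    _ ≤ Fintype.card ι + Fintype.card ι := add_le_add Finset.card_image_le Finset.card_image_le
    _ = 2 * Fintype.card ι := (two_mul _).symm

theorem isSymmGenAdd_signedBasis : IsSymmGenAdd (signedBasis ι) := by
  refine ⟨?_, ?_⟩
  · simp only [signedBasis, Finset.mem_union, Finset.mem_image, Finset.mem_univ, true_and]
    rintro _ (⟨k, rfl⟩ | ⟨k, rfl⟩)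
    · exact Or.inr ⟨k, rfl⟩
    · exact Or.inl ⟨k, (neg_neg _).symm⟩
  · have hbasis : AddSubgroup.closure (Set.range (Pi.basisFun ℤ ι)) = ⊤ := by
      rw [← Submodule.span_int_eq_addSubgroupClosure, Submodule.toAddSubgroup_eq_top,
        Module.Basis.span_eq]
    refine top_le_iff.mp (hbasis ▸ AddSubgroup.closure_mono ?_)
    rintro _ ⟨k, rfl⟩
    simp [signedBasis]

theorem abs_apply_le_one_of_mem_signedBasis {s : ι → ℤ} (hs : s ∈ signedBasis ι) (j : ι) :
    |s j| ≤ 1 := by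
  simp only [signedBasis, Finset.mem_union, Finset.mem_image, Finset.mem_univ, true_and] at hs
  rcases hs with ⟨k, rfl⟩ | ⟨k, rfl⟩ <;> by_cases h : j = k <;> simp [h]

theorem exists_isSymmGenAdd_lt_addWordLen [Nontrivial ι] {X : ι → ℤ} (hX : X ≠ 0) (K : ℕ) :
    ∃ S : Finset (ι → ℤ), IsSymmGenAdd S ∧ S.card ≤ 2 * Fintype.card ι ∧ K < addWordLen S X := by
  obtain ⟨i, hi⟩ := Function.ne_iff.mp hX
  obtain ⟨j, hji⟩ := exists_ne i
  set N : ℤ := K + 1 + |X j|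
  have hN : 0 ≤ N := by positivity
  let f : (ι → ℤ) →+ ℤ := (Pi.evalAddMonoidHom _ j).comp (shear i j N)
  have hS : IsSymmGenAdd ((signedBasis ι).image (shear i j (-N))) :=
    isSymmGenAdd_signedBasis.image _ fun Y =>
      ⟨shear i j N Y, by simpa using shear_shear_neg hji.symm (-N) Y⟩
  refine ⟨_, hS, Finset.card_image_le.trans card_signedBasis_le, ?_⟩
  have hf : ∀ s ∈ (signedBasis ι).image (shear i j (-N)), |f s| ≤ 1 := by
    simp only [Finset.mem_image]
    rintro _ ⟨t, ht, rfl⟩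
    simpa [f, shear_shear_neg hji.symm] using abs_apply_le_one_of_mem_signedBasis ht j
  have hfX : f X = X j + N * X i := shear_apply_self N X
  have hNX : N ≤ |N * X i| := by
    rw [abs_mul, abs_of_nonneg hN]
    exact le_mul_of_one_le_right hN (Int.one_le_abs hi)
  have hlower : |N * X i| ≤ |f X| + |X j| := by
    rw [hfX]
    simpa using abs_sub (X j + N * X i) (X j)
  have := hS.abs_le_addWordLen f hf X
  omega

end Lattice

/-- For `G = ℤ^d` with `d ≥ 2` and every `m ≥ 2d`, `G_bound(m) = {0}`; indeed
every nonzero `X ∈ ℤ^d` has unbounded word length over symmetric generating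
sets of cardinality at most `2d`. -/
theorem stmt17 (d : ℕ) (hd : 2 ≤ d) :
    (∀ m : ℕ, 2 * d ≤ m → AddGBoundD (Fin d → ℤ) m = {0}) ∧
    (∀ X : Fin d → ℤ, X ≠ 0 → ∀ K : ℕ, 0 < K →
      ∃ S : Finset (Fin d → ℤ), IsSymmGenAdd S ∧ S.card ≤ 2 * d ∧
        K < addWordLen S X) := by
  have : Nontrivial (Fin d) := Fin.nontrivial_iff_two_le.mpr hd
  have key (X : Fin d → ℤ) (hX : X ≠ 0) (K : ℕ) :
      ∃ S : Finset (Fin d → ℤ), IsSymmGenAdd S ∧ S.card ≤ 2 * d ∧ K < addWordLen S X := by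
    simpa using exists_isSymmGenAdd_lt_addWordLen hX K
  refine ⟨fun m hm => addGBoundD_eq_singleton_zero fun X hX K => ?_, fun X hX K _ => key X hX K⟩
  obtain ⟨S, hS, hcard, hlt⟩ := key X hX K
  exact ⟨S, hS, hcard.trans hm, hlt⟩
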